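/- arXiv:2511.16080 — 2 statements merged into one kernel-verified Lean document; each statement's English description precedes it below -/
import Mathlib

section
/- For a convex subspace E of D and a coordinate c over dep(E) (a total in-bounds function on dep(E)), the subcoordinate space {c|E : c ∈ C(E↓; R), c|dep(E) = c_dep} equals the coordinate space of the restricted shape: there exists a shape R' on the subposet (E, ≺|E) such that the subcoordinate space over (E, c_dep) equals C(E; R'). -/
open Classical

/-- The (principal) dependency space of a dimension: all strict ancestors. -/
def dep {D : Type} (prec : D → D → Prop) (d : D) : Set D := {e | prec e d}

/-- Restriction of a partial function (modeled via `Option`) to a set. -/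
noncomputable def restrict {D : Type} (c : D → Option ℕ) (S : Set D) : D → Option ℕ :=
  fun e => if e ∈ S then c e else none

/-- Domain of a partial function. -/
def pdom {D : Type} (c : D → Option ℕ) : Set D := {e | c e ≠ none}

/-- A resolution map sends pairs `(d, c)` with `c` total exactly on `dep d` to lengths. -/
def ResMapOk {D : Type} (prec : D → D → Prop) (R : D → (D → Option ℕ) → Option ℕ) : Prop :=
  ∀ d c, R d c ≠ none → pdom c = dep prec d

/-- The in-bounds condition `ib(R; c)`. -/
def ib {D : Type} (prec : D → D → Prop) (R : D → (D → Option ℕ) → Option ℕ)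
    (c : D → Option ℕ) : Prop :=
  ∀ d v, c d = some v → ∃ ℓ, R d (restrict c (dep prec d)) = some ℓ ∧ v < ℓ

/-- A partial shape: every resolution present is in-bounds. -/
def IsPartialShape {D : Type} (prec : D → D → Prop)
    (R : D → (D → Option ℕ) → Option ℕ) : Prop :=
  ResMapOk prec R ∧ ∀ d c, R d c ≠ none → ib prec R c

/-- A (complete) shape: membership in the domain is equivalent to in-boundedness. -/
def IsShape {D : Type} (prec : D → D → Prop)
    (R : D → (D → Option ℕ) → Option ℕ) : Prop :=
  ResMapOk prec R ∧ ∀ d c, pdom c = dep prec d → (R d c ≠ none ↔ ib prec R c)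

/-- Compatibility of a pair `(d, c)` with a partial shape. -/
def compat {D : Type} (prec : D → D → Prop) (R : D → (D → Option ℕ) → Option ℕ)
    (d : D) (c : D → Option ℕ) : Prop :=
  pdom c = dep prec d ∧ ib prec R c ∧ R d c = none

/-- Extending a resolution map by one resolution `(d, c) ↦ ℓ`. -/
noncomputable def extend {D : Type} (R : D → (D → Option ℕ) → Option ℕ)
    (d : D) (c : D → Option ℕ) (ℓ : ℕ) : D → (D → Option ℕ) → Option ℕ :=
  fun d' c' => if d' = d ∧ c' = c then some ℓ else R d' c'

/-- Downward closedness of a set with respect to a relation. -/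
def DownClosed {D : Type} (prec : D → D → Prop) (F : Set D) : Prop :=
  ∀ a b, prec a b → b ∈ F → a ∈ F

/-- A coordinate with unknowns over a (downward closed) set `F`. -/
def CoordU {D : Type} (prec : D → D → Prop) (R : D → (D → Option ℕ) → Option ℕ)
    (F : Set D) (c : D → Option ℕ) : Prop :=
  pdom c ⊆ F ∧ ib prec R c ∧ ∀ e ∈ F, c e = none → R e (restrict c (dep prec e)) = none

/-- Downward closure under the reflexive closure of `prec`. -/
def dcl {D : Type} (prec : D → D → Prop) (E : Set D) : Set D :=
  {x | ∃ e ∈ E, x = e ∨ prec x e}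

/-- Dependency space of a subspace. -/
def depS {D : Type} (prec : D → D → Prop) (E : Set D) : Set D := dcl prec E \ E

/-!
Glue a coordinate `cs` on `E` with the fixed coordinate `cdep` on `dep(E)`. The restricted shape
evaluates `R` on the glued coordinate, so the in-bounds condition of `R` at a point of `E` is the
in-bounds condition of the restricted shape at that point. At a point of `dep(E)` the glued
coordinate is `cdep` on the whole dependency space (this is where convexity enters), so the
in-bounds condition there is that of `cdep`, which holds by assumption. Comparing the in-bounds
conditions pointwise gives both the completeness of the restricted shape and the description of
the subcoordinate space.
-/

variable {D : Type}

def ibAt (prec : D → D → Prop) (R : D → (D → Option ℕ) → Option ℕ)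
    (c : D → Option ℕ) (d : D) : Prop :=
  ∀ v, c d = some v → ∃ ℓ, R d (restrict c (dep prec d)) = some ℓ ∧ v < ℓ

section Restrict

variable {c c' : D → Option ℕ} {S T : Set D}

lemma mem_pdom {x : D} : x ∈ pdom c ↔ c x ≠ none := Iff.rfl

lemma pdom_restrict : pdom (restrict c S) = S ∩ pdom c := by
  ext x
  by_cases hx : x ∈ S <;> simp [pdom, restrict, hx]

lemma restrict_congr (h : ∀ x ∈ S, c x = c' x) : restrict c S = restrict c' S := by
  funext x
  unfold restrict
  split_ifs with hx
  exacts [h x hx, rfl]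

lemma restrict_restrict_of_subset (h : T ⊆ S) : restrict (restrict c S) T = restrict c T :=
  restrict_congr fun _ hx => if_pos (h hx)

lemma restrict_eq_self_of_pdom_subset (h : pdom c ⊆ S) : restrict c S = c := by
  funext x
  unfold restrict
  split_ifs with hx
  · rfl
  · exact (not_not.1 fun hc => hx (h hc)).symm

variable {prec : D → D → Prop} {R : D → (D → Option ℕ) → Option ℕ} {d : D}

lemma ibAt_restrict_of_not_mem (hd : d ∉ S) : ibAt prec R (restrict c S) d := by
  intro v hv
  simp [restrict, hd] at hv

lemma ibAt_restrict_iff (hd : d ∈ S) (hS : dep prec d ⊆ S) :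
    ibAt prec R (restrict c S) d ↔ ibAt prec R c d := by
  simp only [ibAt, restrict_restrict_of_subset hS, restrict, if_pos hd]

lemma ib_restrict_dep_iff [IsTrans D prec] (e : D) :
    ib prec R (restrict c (dep prec e)) ↔ ∀ d ∈ dep prec e, ibAt prec R c d := by
  refine ⟨fun h d hd => (ibAt_restrict_iff hd ?_).1 (h d), fun h d => ?_⟩
  · exact fun x hx => _root_.trans (r := prec) hx hd
  by_cases hd : d ∈ dep prec e
  · exact (ibAt_restrict_iff hd fun x hx => _root_.trans (r := prec) hx hd).2 (h d hd)
  · exact ibAt_restrict_of_not_mem hd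

end Restrict

instance Subtype.isTrans_val {prec : D → D → Prop} [IsTrans D prec] (E : Set D) :
    IsTrans ↥E (fun a b : ↥E => prec a b) :=
  ⟨fun _ _ _ => _root_.trans (r := prec)⟩

noncomputable def glue (E : Set D) (cdep : D → Option ℕ) (cs : ↥E → Option ℕ) : D → Option ℕ :=
  fun x => if h : x ∈ E then cs ⟨x, h⟩ else cdep x

noncomputable def restrictedShape (prec : D → D → Prop) (R : D → (D → Option ℕ) → Option ℕ)
    (E : Set D) (cdep : D → Option ℕ) : ↥E → (↥E → Option ℕ) → Option ℕ :=
  fun e cs => if pdom cs = dep (fun a b : ↥E => prec a b) e then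
    R e (restrict (glue E cdep cs) (dep prec e)) else none

section Glue

variable {E : Set D} {cdep : D → Option ℕ} {prec : D → D → Prop}
  {R : D → (D → Option ℕ) → Option ℕ}

lemma glue_val (cs : ↥E → Option ℕ) (d : ↥E) : glue E cdep cs d = cs d := dif_pos d.2

lemma glue_of_mem (cs : ↥E → Option ℕ) {x : D} (hx : x ∈ E) :
    glue E cdep cs x = cs ⟨x, hx⟩ :=
  dif_pos hx

lemma glue_of_not_mem (cs : ↥E → Option ℕ) {x : D} (hx : x ∉ E) :
    glue E cdep cs x = cdep x :=
  dif_neg hx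

lemma restrict_glue_depS (hdomc : pdom cdep ⊆ depS prec E) (cs : ↥E → Option ℕ) :
    restrict (glue E cdep cs) (depS prec E) = cdep := by
  funext x
  by_cases hx : x ∈ depS prec E
  · rw [restrict, if_pos hx, glue_of_not_mem cs hx.2]
  · rw [restrict, if_neg hx]
    exact (not_not.1 fun hc => hx (hdomc hc)).symm

lemma pdom_glue (hdomc : pdom cdep = depS prec E) {cs : ↥E → Option ℕ}
    (htot : ∀ d, cs d ≠ none) : pdom (glue E cdep cs) = dcl prec E := by
  ext x
  by_cases hx : x ∈ E
  · rw [mem_pdom, glue_of_mem cs hx]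
    exact ⟨fun _ => ⟨x, hx, Or.inl rfl⟩, fun _ => htot ⟨x, hx⟩⟩
  · rw [mem_pdom, glue_of_not_mem cs hx, ← mem_pdom, hdomc]
    exact ⟨And.left, fun h => ⟨h, hx⟩⟩

lemma eq_glue {c : D → Option ℕ} (hc : pdom c ⊆ dcl prec E)
    (hres : restrict c (depS prec E) = cdep) {cs : ↥E → Option ℕ} (hcs : ∀ e : ↥E, cs e = c e) :
    c = glue E cdep cs := by
  funext x
  by_cases hx : x ∈ E
  · rw [glue_val cs ⟨x, hx⟩, hcs]
  rw [glue_of_not_mem cs hx, ← hres, restrict]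
  split_ifs with hS
  · rfl
  · exact not_not.1 fun h => hS ⟨hc h, hx⟩

lemma restrictedShape_resMapOk :
    ResMapOk (fun a b : ↥E => prec a b) (restrictedShape prec R E cdep) := by
  intro e cs hne
  by_contra h
  exact hne (if_neg h)

lemma restrictedShape_restrict {cs : ↥E → Option ℕ} {d : ↥E}
    (h : dep (fun a b : ↥E => prec a b) d ⊆ pdom cs) :
    restrictedShape prec R E cdep d (restrict cs (dep (fun a b : ↥E => prec a b) d)) =
      R d (restrict (glue E cdep cs) (dep prec d)) := by
  rw [restrictedShape, if_pos (pdom_restrict.trans (Set.inter_eq_left.2 h))]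
  refine congrArg _ (restrict_congr fun x hx => ?_)
  by_cases hE : x ∈ E
  · rw [glue_of_mem _ hE, glue_of_mem _ hE, restrict,
      if_pos (show (⟨x, hE⟩ : ↥E) ∈ dep (fun a b : ↥E => prec a b) d from hx)]
  · rw [glue_of_not_mem _ hE, glue_of_not_mem _ hE]

lemma ibAt_glue_iff {cs : ↥E → Option ℕ} {d : ↥E}
    (hcs : cs d ≠ none → dep (fun a b : ↥E => prec a b) d ⊆ pdom cs) :
    ibAt prec R (glue E cdep cs) d ↔
      ibAt (fun a b : ↥E => prec a b) (restrictedShape prec R E cdep) cs d := by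
  by_cases hd : cs d = none
  · simp [ibAt, glue_val, hd]
  · simp only [ibAt, glue_val, restrictedShape_restrict (hcs hd)]

lemma ibAt_glue_of_not_mem (hconv : DownClosed prec (depS prec E))
    (hdomc : pdom cdep ⊆ depS prec E) (hibc : ib prec R cdep) (cs : ↥E → Option ℕ) {d : D}
    (hd : d ∉ E) : ibAt prec R (glue E cdep cs) d := by
  intro v hv
  rw [glue_of_not_mem cs hd] at hv
  have hdS : d ∈ depS prec E := hdomc (by simp [mem_pdom, hv])
  have hdep : restrict (glue E cdep cs) (dep prec d) = restrict cdep (dep prec d) :=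
    restrict_congr fun x hx => glue_of_not_mem cs (hconv x d hx hdS).2
  rw [hdep]
  exact hibc d v hv

lemma forall_ibAt_glue_iff (hconv : DownClosed prec (depS prec E))
    (hdomc : pdom cdep ⊆ depS prec E) (hibc : ib prec R cdep) {cs : ↥E → Option ℕ}
    (hcs : ∀ d, cs d ≠ none → dep (fun a b : ↥E => prec a b) d ⊆ pdom cs) (S : Set D) :
    (∀ d ∈ S, ibAt prec R (glue E cdep cs) d) ↔
      ∀ d : ↥E, d.val ∈ S →
        ibAt (fun a b : ↥E => prec a b) (restrictedShape prec R E cdep) cs d := by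
  refine ⟨fun h d hd => (ibAt_glue_iff (hcs d)).1 (h d hd), fun h d hd => ?_⟩
  by_cases hE : d ∈ E
  · exact (ibAt_glue_iff (hcs ⟨d, hE⟩)).2 (h ⟨d, hE⟩ hd)
  · exact ibAt_glue_of_not_mem hconv hdomc hibc cs hE

lemma ib_glue_iff (hconv : DownClosed prec (depS prec E))
    (hdomc : pdom cdep ⊆ depS prec E) (hibc : ib prec R cdep) {cs : ↥E → Option ℕ}
    (htot : ∀ d, cs d ≠ none) :
    ib prec R (glue E cdep cs) ↔
      ib (fun a b : ↥E => prec a b) (restrictedShape prec R E cdep) cs := by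
  have h := forall_ibAt_glue_iff (R := R) hconv hdomc hibc (fun _ _ x _ => htot x) Set.univ
  simp only [Set.mem_univ, forall_const] at h
  exact h

lemma restrictedShape_isShape [IsTrans D prec] (hR : IsShape prec R)
    (hconv : DownClosed prec (depS prec E)) (hdomc : pdom cdep = depS prec E)
    (hibc : ib prec R cdep) :
    IsShape (fun a b : ↥E => prec a b) (restrictedShape prec R E cdep) := by
  refine ⟨restrictedShape_resMapOk, fun e cs hdom => ?_⟩
  have hcs : ∀ d, cs d ≠ none → dep (fun a b : ↥E => prec a b) d ⊆ pdom cs := by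
    intro d hd x hx
    rw [← mem_pdom, hdom] at hd
    rw [hdom]
    exact _root_.trans (r := prec) hx hd
  have htot : dep prec e ⊆ pdom (glue E cdep cs) := by
    intro x hx
    by_cases hE : x ∈ E
    · rw [mem_pdom, glue_of_mem cs hE, ← mem_pdom, hdom]
      exact hx
    · rw [mem_pdom, glue_of_not_mem cs hE, ← mem_pdom, hdomc]
      exact ⟨⟨e, e.2, Or.inr hx⟩, hE⟩
  calc restrictedShape prec R E cdep e cs ≠ none
      ↔ ib prec R (restrict (glue E cdep cs) (dep prec e)) := by
        rw [restrictedShape, if_pos hdom]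
        exact hR.2 _ _ (pdom_restrict.trans (Set.inter_eq_left.2 htot))
    _ ↔ ∀ d ∈ dep prec e, ibAt prec R (glue E cdep cs) d := ib_restrict_dep_iff e.val
    _ ↔ ∀ d ∈ dep (fun a b : ↥E => prec a b) e,
          ibAt (fun a b : ↥E => prec a b) (restrictedShape prec R E cdep) cs d :=
        forall_ibAt_glue_iff hconv hdomc.le hibc hcs _
    _ ↔ ib (fun a b : ↥E => prec a b) (restrictedShape prec R E cdep)
          (restrict cs (dep (fun a b : ↥E => prec a b) e)) := (ib_restrict_dep_iff e).symm
    _ ↔ ib (fun a b : ↥E => prec a b) (restrictedShape prec R E cdep) cs := by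
        rw [restrict_eq_self_of_pdom_subset hdom.le]

end Glue

theorem stmt11_general {D : Type} (prec : D → D → Prop)
    [IsTrans D prec]
    (R : D → (D → Option ℕ) → Option ℕ) (hR : IsShape prec R)
    (E : Set D) (hconv : DownClosed prec (depS prec E))
    (cdep : D → Option ℕ) (h1 : pdom cdep = depS prec E) (h2 : ib prec R cdep) :
    ∃ R' : ↥E → (↥E → Option ℕ) → Option ℕ,
      IsShape (fun a b : ↥E => prec a b) R' ∧
      {cs : ↥E → Option ℕ | ∃ c : D → Option ℕ,
          pdom c = dcl prec E ∧ ib prec R c ∧ restrict c (depS prec E) = cdep ∧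
          ∀ e : ↥E, cs e = c e} =
      {cs : ↥E → Option ℕ | pdom cs = Set.univ ∧ ib (fun a b : ↥E => prec a b) R' cs} := by
  refine ⟨restrictedShape prec R E cdep, restrictedShape_isShape hR hconv h1 h2, ?_⟩
  ext cs
  simp only [Set.mem_ofPred_eq, Set.eq_univ_iff_forall, mem_pdom]
  constructor
  · rintro ⟨c, hc, hib, hres, hcs⟩
    obtain rfl := eq_glue hc.le hres hcs
    have htot : ∀ d, cs d ≠ none := fun d => by
      rw [← glue_val (cdep := cdep) cs d, ← mem_pdom, hc]
      exact ⟨d, d.2, Or.inl rfl⟩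
    exact ⟨htot, (ib_glue_iff hconv h1.le h2 htot).1 hib⟩
  · rintro ⟨htot, hib⟩
    exact ⟨glue E cdep cs, pdom_glue h1 htot, (ib_glue_iff hconv h1.le h2 htot).2 hib,
      restrict_glue_depS h1.le cs, fun e => (glue_val cs e).symm⟩

/-- The subcoordinate space over a convex subspace `E` and a coordinate over `dep(E)`
is the coordinate space of a restricted shape on the subposet `(E, ≺|E)`. -/
theorem stmt11 {D : Type} [Fintype D] (prec : D → D → Prop)
    [IsIrrefl D prec] [IsTrans D prec]
    (R : D → (D → Option ℕ) → Option ℕ) (hR : IsShape prec R)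
    (E : Set D) (hconv : DownClosed prec (depS prec E))
    (cdep : D → Option ℕ) (h1 : pdom cdep = depS prec E) (h2 : ib prec R cdep) :
    ∃ R' : ↥E → (↥E → Option ℕ) → Option ℕ,
      IsShape (fun a b : ↥E => prec a b) R' ∧
      {cs : ↥E → Option ℕ | ∃ c : D → Option ℕ,
          pdom c = dcl prec E ∧ ib prec R c ∧ restrict c (depS prec E) = cdep ∧
          ∀ e : ↥E, cs e = c e} =
      {cs : ↥E → Option ℕ | pdom cs = Set.univ ∧ ib (fun a b : ↥E => prec a b) R' cs} :=
  stmt11_general prec R hR E hconv cdep h1 h2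
end

section
/- If every resolution in a complete shape R has positive length, then the number of resolutions in R is at most the number of resolutions in its canonical expansion R_L with respect to any linear extension L: |R| ≤ |R_L|. -/
open Classical

/-! ### Auxiliary lemmas -/

lemma restrict_restrict {D : Type} (c : D → Option ℕ) {A B : Set D} (h : B ⊆ A) :
    restrict (restrict c A) B = restrict c B := by
  funext x
  by_cases hx : x ∈ B
  · simp [restrict, hx, h hx]
  · simp [restrict, hx]

lemma pdom_restrict_s15 {D : Type} (c : D → Option ℕ) (A : Set D) :
    pdom (restrict c A) = A ∩ pdom c := by
  ext x
  by_cases hx : x ∈ A <;> simp [pdom, restrict, hx]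

lemma restrict_self {D : Type} (c : D → Option ℕ) (A : Set D) (h : pdom c = A) :
    restrict c A = c := by
  funext x
  by_cases hx : x ∈ A
  · simp [restrict, hx]
  · have : c x = none := by
      have : x ∉ pdom c := h ▸ hx
      simpa [pdom] using this
    simp [restrict, hx, this]

/-- For a partial shape over a well-founded relation, the set of in-domain coordinates
at each dimension is finite. -/
lemma shape_fiber_finite {D : Type} [Fintype D] (r : D → D → Prop)
    (R' : D → (D → Option ℕ) → Option ℕ) (hwf : WellFounded r)
    (hok : ResMapOk r R') (hib : ∀ d c, R' d c ≠ none → ib r R' c) :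
    ∀ d, {c | R' d c ≠ none}.Finite := by
  intro d
  induction d using WellFounded.induction hwf with
  | _ d IH =>
  classical
  set W : D → Set ℕ :=
    fun e => ⋃ c' ∈ {c | R' e c ≠ none}, {v | ∃ ℓ, R' e c' = some ℓ ∧ v < ℓ} with hW
  have hWfin : ∀ e, r e d → (W e).Finite := by
    intro e he
    apply Set.Finite.biUnion (IH e he)
    intro c' _
    cases h : R' e c' with
    | none => simp [h]
    | some ℓ =>
      apply (Set.finite_Iio ℓ).subset
      rintro v ⟨ℓ', h1, h2⟩
      exact (Option.some.inj h1) ▸ h2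
  set V : D → Set (Option ℕ) :=
    fun e => if r e d then insert none (Option.some '' W e) else {none} with hV
  have hVfin : ∀ e, (V e).Finite := by
    intro e
    by_cases he : r e d
    · simp only [hV, if_pos he]
      exact ((hWfin e he).image _).insert none
    · simp [hV, he]
  apply (Set.Finite.pi hVfin).subset
  intro c hc
  simp only [Set.mem_pi, Set.mem_univ, forall_true_left]
  intro e
  have hpc : pdom c = dep r d := hok d c hc
  cases h : c e with
  | none =>
    by_cases he : r e d <;> simp [hV, he]
  | some v =>
    have hed : r e d := by
      have : e ∈ pdom c := by simp [pdom, h]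
      rwa [hpc] at this
    obtain ⟨ℓ, hℓ, hv⟩ := hib d c hc e v h
    simp only [hV, if_pos hed, Set.mem_insert_iff]
    right
    refine ⟨v, ?_, rfl⟩
    refine Set.mem_biUnion (s := {c | R' e c ≠ none}) ?_ ⟨ℓ, hℓ, hv⟩
    simp [hℓ]

/-- Extension of a coordinate by zeros on the new dependencies. -/
noncomputable def cext {D : Type} (precL : D → D → Prop) (d : D) (c : D → Option ℕ) :
    D → Option ℕ :=
  fun e => if precL e d then some ((c e).getD 0) else none

/-- If every resolution has positive length, the shape has at most as many
resolutions as its canonical expansion. -/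
theorem stmt15 {D : Type} [Fintype D] (prec precL : D → D → Prop)
    [IsIrrefl D prec] [IsTrans D prec] [IsStrictTotalOrder D precL]
    (hext : ∀ a b, prec a b → precL a b)
    (R RL : D → (D → Option ℕ) → Option ℕ)
    (hR : IsShape prec R) (hRL : IsShape precL RL)
    (hcan : ∀ d cL ℓ, RL d cL = some ℓ → R d (restrict cL (dep prec d)) = some ℓ)
    (hpos : ∀ d c ℓ, R d c = some ℓ → 0 < ℓ) :
    {p : D × (D → Option ℕ) × ℕ | R p.1 p.2.1 = some p.2.2}.ncard ≤
      {p : D × (D → Option ℕ) × ℕ | RL p.1 p.2.1 = some p.2.2}.ncard := by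
  classical
  obtain ⟨hRok, hRib⟩ := hR
  obtain ⟨hLok, hLib⟩ := hRL
  have hwfL : WellFounded precL := Finite.wellFounded_of_trans_of_irrefl precL
  have hdepL_mono : ∀ {a b : D}, precL a b → dep precL a ⊆ dep precL b := by
    intro a b hab x hx
    exact IsTrans.trans x a b hx hab
  have hdep_mono : ∀ {a b : D}, prec a b → dep prec a ⊆ dep prec b := by
    intro a b hab x hx
    exact IsTrans.trans x a b hx hab
  have hdep_sub : ∀ a : D, dep prec a ⊆ dep precL a := by
    intro a x hx
    exact hext x a hx
  -- basic properties of cext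
  have hXe : ∀ d c, pdom c = dep prec d → ∀ e, prec e d → cext precL d c e = c e := by
    intro d c hpc e he
    have hce : c e ≠ none := by
      have : e ∈ pdom c := hpc ▸ he
      simpa [pdom] using this
    obtain ⟨v, hv⟩ := Option.ne_none_iff_exists'.mp hce
    simp [cext, hext e d he, hv]
  have hpX : ∀ d c, pdom (cext precL d c) = dep precL d := by
    intro d c
    ext e
    by_cases he : precL e d <;> simp [pdom, cext, dep, he]
  have hres : ∀ d c, pdom c = dep prec d →
      restrict (cext precL d c) (dep prec d) = c := by
    intro d c hpc
    funext e
    by_cases he : e ∈ dep prec d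
    · simpa [restrict, he] using hXe d c hpc e he
    · have : c e = none := by
        have : e ∉ pdom c := hpc ▸ he
        simpa [pdom] using this
      simp [restrict, he, this]
  -- main claim: the canonical expansion contains the extended resolution
  have hmain : ∀ d c, R d c ≠ none → RL d (cext precL d c) = R d c := by
    intro d c hdc
    have hpc : pdom c = dep prec d := hRok d c hdc
    have hibc : ib prec R c := (hRib d c hpc).mp hdc
    set X := cext precL d c with hXdef
    have key : ∀ e, ib precL RL (restrict X (dep precL e)) := by
      intro e
      induction e using WellFounded.induction hwfL with
      | _ e IH =>
      intro e' v hv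
      have hee : e' ∈ dep precL e := by
        by_contra h
        simp [restrict, h] at hv
      have hXv : X e' = some v := by simpa [restrict, hee] using hv
      have he'd : precL e' d := by
        have : e' ∈ pdom X := by simp [pdom, hXv]
        rwa [hpX d c] at this
      rw [restrict_restrict X (hdepL_mono hee)]
      have hpd : pdom (restrict X (dep precL e')) = dep precL e' := by
        rw [pdom_restrict_s15, hpX d c]
        exact Set.inter_eq_self_of_subset_left (hdepL_mono he'd)
      have hne : RL e' (restrict X (dep precL e')) ≠ none :=
        (hLib e' _ hpd).mpr (IH e' hee)
      obtain ⟨ℓ', hℓ'⟩ := Option.ne_none_iff_exists'.mp hne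
      have hRe' : R e' (restrict X (dep prec e')) = some ℓ' := by
        have h := hcan e' _ _ hℓ'
        rwa [restrict_restrict X (hdep_sub e')] at h
      refine ⟨ℓ', hℓ', ?_⟩
      by_cases hpe : prec e' d
      · have hce' : c e' = some v := by rw [← hXe d c hpc e' hpe]; exact hXv
        obtain ⟨ℓ'', hℓ'', hv''⟩ := hibc e' v hce'
        have heq : restrict X (dep prec e') = restrict c (dep prec e') := by
          funext x
          by_cases hx : x ∈ dep prec e'
          · have hxd : prec x d := IsTrans.trans x e' d hx hpe
            simpa [restrict, hx] using hXe d c hpc x hxd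
          · simp [restrict, hx]
        rw [heq, hℓ''] at hRe'
        cases hRe'
        exact hv''
      · have hce' : c e' = none := by
          have : e' ∉ pdom c := hpc ▸ hpe
          simpa [pdom] using this
        have hv0 : v = 0 := by
          have : X e' = some 0 := by simp [hXdef, cext, he'd, hce']
          rw [this] at hXv
          exact (Option.some.inj hXv).symm
        rw [hv0]
        exact hpos e' _ ℓ' hRe'
    have hibX : ib precL RL X := by
      have h := key d
      rwa [restrict_self X _ (hpX d c)] at h
    have hne : RL d X ≠ none := (hLib d X (hpX d c)).mpr hibX
    obtain ⟨ℓ', hℓ'⟩ := Option.ne_none_iff_exists'.mp hne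
    have hRdc : R d c = some ℓ' := by
      have h := hcan d X ℓ' hℓ'
      rwa [hres d c hpc] at h
    rw [hℓ', hRdc]
  -- finiteness of the target set
  have hCfin := shape_fiber_finite precL RL hwfL hLok
    (fun d c h => (hLib d c (hLok d c h)).mp h)
  have hTfin : {p : D × (D → Option ℕ) × ℕ | RL p.1 p.2.1 = some p.2.2}.Finite := by
    have h1 : (⋃ d : D, {c | RL d c ≠ none}).Finite := Set.finite_iUnion hCfin
    have h2 : ((Set.univ : Set D) ×ˢ (⋃ d : D, {c | RL d c ≠ none})).Finite :=
      Set.finite_univ.prod h1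
    apply Set.Finite.of_finite_image
      (f := fun p : D × (D → Option ℕ) × ℕ => (p.1, p.2.1))
    · apply h2.subset
      rintro ⟨d, c⟩ ⟨⟨d', c', ℓ⟩, hp, heq⟩
      simp only [Prod.mk.injEq] at heq
      obtain ⟨h1', h2'⟩ := heq
      subst h1'; subst h2'
      refine ⟨Set.mem_univ _, ?_⟩
      exact Set.mem_iUnion.mpr ⟨d', by simp_all⟩
    · rintro ⟨d, c, ℓ⟩ hp ⟨d', c', ℓ'⟩ hq h
      simp only [Prod.mk.injEq] at h
      obtain ⟨h1', h2'⟩ := h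
      subst h1'; subst h2'
      simp only [Set.mem_setOf_eq] at hp hq
      rw [hp] at hq
      simp [Option.some.inj hq]
  -- conclude via an injection
  refine Set.ncard_le_ncard_of_injOn
    (fun p : D × (D → Option ℕ) × ℕ => (p.1, cext precL p.1 p.2.1, p.2.2)) ?_ ?_ hTfin
  · rintro ⟨d, c, ℓ⟩ hp
    simp only [Set.mem_setOf_eq] at hp ⊢
    rw [hmain d c (by simp [hp])]
    exact hp
  · rintro ⟨d, c, ℓ⟩ hp ⟨d', c', ℓ'⟩ hq h
    simp only [Set.mem_setOf_eq] at hp hq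
    simp only [Prod.mk.injEq] at h
    obtain ⟨h1', h2', h3'⟩ := h
    subst h1'; subst h3'
    have hc : c = c' := by
      have e1 := hres d c (hRok d c (by simp [hp]))
      have e2 := hres d c' (hRok d c' (by simp [hq]))
      rw [← e1, ← e2, h2']
    simp [hc]
end
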